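/- Let f : ℕ → ℝ be such that (1/N) ∑_{n=1}^{N} |Δf(n)| → 0 as N → ∞. Then the sequence of exponential sums { ∑_{n=1}^{N} e(f(n)) : N ≥ 1 } is unbounded. -/

import Mathlib

/-!
Write `N = ∑_{n ≤ N} e(-f(n)) e(f(n))` and sum by parts against the partial sums
`S_n = ∑_{k ≤ n} e(f(k))`. Since `n ↦ e(-f(n))` has modulus one and is `2π`-Lipschitz in `f(n)`,
a bound `‖S_n‖ ≤ M` gives `N ≤ M (1 + 2π ∑_{n ≤ N} |Δf(n)|) = M + o(N)`, which is absurd.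
-/

open Filter

/-- `e(x) = e^{2πix}`. -/
noncomputable def e (x : ℝ) : ℂ := Complex.exp (2 * Real.pi * Complex.I * x)

open Finset

theorem sum_Icc_one_eq_sum_range {M : Type*} [AddCommMonoid M] (F : ℕ → M) (N : ℕ) :
    ∑ n ∈ Icc 1 N, F n = ∑ i ∈ range N, F (i + 1) := by
  rw [range_eq_Ico, sum_Ico_add' F 0 N 1]
  rfl

theorem norm_sum_range_smul_le_of_norm_partialSum_le {R E : Type*} [SeminormedRing R]
    [SeminormedAddCommGroup E] [Module R E] [IsBoundedSMul R E] (a : ℕ → R) (b : ℕ → E) {B : ℝ}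
    (hB : ∀ n, ‖∑ i ∈ range n, b i‖ ≤ B) (N : ℕ) :
    ‖∑ i ∈ range N, a i • b i‖ ≤ B * (‖a (N - 1)‖ + ∑ i ∈ range (N - 1), ‖a (i + 1) - a i‖) := by
  rw [sum_range_by_parts, mul_add, mul_sum]
  refine (norm_sub_le _ _).trans
    (add_le_add ?_ ((norm_sum_le _ _).trans (sum_le_sum fun i _ => ?_)))
  · exact (norm_smul_le _ _).trans (by rw [mul_comm]; gcongr; exact hB N)
  · exact (norm_smul_le _ _).trans (by rw [mul_comm]; gcongr; exact hB _)

theorem e_eq_exp (x : ℝ) : e x = Complex.exp (Complex.I * (2 * Real.pi * x : ℝ)) := by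
  rw [e]; push_cast; ring_nf

theorem norm_e (x : ℝ) : ‖e x‖ = 1 := by
  rw [e_eq_exp, Complex.norm_exp_I_mul_ofReal]

theorem e_add (x y : ℝ) : e (x + y) = e x * e y := by
  simp only [e, ← Complex.exp_add]; push_cast; ring_nf

theorem e_neg_mul_e (x : ℝ) : e (-x) * e x = 1 := by
  rw [← e_add, neg_add_cancel, e, Complex.ofReal_zero, mul_zero, Complex.exp_zero]

theorem norm_e_sub_one_le (x : ℝ) : ‖e x - 1‖ ≤ 2 * Real.pi * |x| := by
  have := Real.norm_exp_I_mul_ofReal_sub_one_le (x := 2 * Real.pi * x)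
  rwa [← e_eq_exp, Real.norm_eq_abs, abs_mul, abs_of_pos Real.two_pi_pos] at this

theorem norm_e_sub_e_le (x y : ℝ) : ‖e x - e y‖ ≤ 2 * Real.pi * |x - y| := by
  calc ‖e x - e y‖ = ‖e y * (e (x - y) - 1)‖ := by
        rw [mul_sub, ← e_add, add_sub_cancel, mul_one]
    _ ≤ 2 * Real.pi * |x - y| := by rw [norm_mul, norm_e, one_mul]; exact norm_e_sub_one_le _

theorem natCast_le_of_norm_sum_e_le (f : ℕ → ℝ) {M : ℝ}
    (hM : ∀ N, ‖∑ n ∈ Icc 1 N, e (f n)‖ ≤ M) (N : ℕ) :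
    (N : ℝ) ≤ M * (1 + 2 * Real.pi * ∑ n ∈ Icc 1 N, |f (n + 1) - f n|) := by
  have hN : (N : ℂ) = ∑ i ∈ range N, e (-f (i + 1)) • e (f (i + 1)) := by
    simp [e_neg_mul_e]
  have hvar : ∑ i ∈ range (N - 1), ‖e (-f (i + 1 + 1)) - e (-f (i + 1))‖
      ≤ 2 * Real.pi * ∑ n ∈ Icc 1 N, |f (n + 1) - f n| := by
    rw [sum_Icc_one_eq_sum_range, mul_sum]
    calc ∑ i ∈ range (N - 1), ‖e (-f (i + 1 + 1)) - e (-f (i + 1))‖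
        ≤ ∑ i ∈ range (N - 1), 2 * Real.pi * |f (i + 1 + 1) - f (i + 1)| := by
          refine sum_le_sum fun i _ => (norm_e_sub_e_le _ _).trans_eq ?_
          rw [neg_sub_neg, abs_sub_comm]
      _ ≤ ∑ i ∈ range N, 2 * Real.pi * |f (i + 1 + 1) - f (i + 1)| :=
          sum_le_sum_of_subset_of_nonneg (range_subset_range.2 (N.sub_le 1)) fun _ _ _ => by
            positivity
  calc (N : ℝ) = ‖(N : ℂ)‖ := by simp
    _ ≤ M * (‖e (-f (N - 1 + 1))‖
          + ∑ i ∈ range (N - 1), ‖e (-f (i + 1 + 1)) - e (-f (i + 1))‖) := by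
        rw [hN]
        refine norm_sum_range_smul_le_of_norm_partialSum_le _ _ (fun n => ?_) N
        simpa only [sum_Icc_one_eq_sum_range] using hM n
    _ ≤ M * (1 + 2 * Real.pi * ∑ n ∈ Icc 1 N, |f (n + 1) - f n|) := by
        have hM0 : 0 ≤ M := (norm_nonneg _).trans (hM 0)
        rw [norm_e]
        gcongr

/-- if `(1/N) ∑_{n=1}^{N} |Δf(n)| → 0`, then the exponential sums
`∑_{n=1}^{N} e(f(n))` are unbounded. -/
theorem stmt_5 (f : ℕ → ℝ)
    (h : Tendsto
      (fun N : ℕ => (1 / (N : ℝ)) * ∑ n ∈ Finset.Icc 1 N, |f (n + 1) - f n|)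
      atTop (nhds 0)) :
    ¬ ∃ M : ℝ, ∀ N : ℕ, 1 ≤ N →
      ‖∑ n ∈ Finset.Icc 1 N, e (f n)‖ ≤ M := by
  rintro ⟨M, hM⟩
  have hM' : ∀ N, ‖∑ n ∈ Icc 1 N, e (f n)‖ ≤ M := by
    rintro (_ | N)
    · simpa using (norm_nonneg _).trans (hM 1 le_rfl)
    · exact hM _ N.succ_pos
  have hlim : Tendsto (fun N : ℕ => M * (1 / (N : ℝ))
      + 2 * Real.pi * M * ((1 / (N : ℝ)) * ∑ n ∈ Icc 1 N, |f (n + 1) - f n|)) atTop (nhds 0) := by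
    simpa using (tendsto_one_div_atTop_nhds_zero_nat.const_mul M).add
      (h.const_mul (2 * Real.pi * M))
  have hge : ∀ᶠ N : ℕ in atTop, 1 ≤ M * (1 / (N : ℝ))
      + 2 * Real.pi * M * ((1 / (N : ℝ)) * ∑ n ∈ Icc 1 N, |f (n + 1) - f n|) := by
    filter_upwards [eventually_ge_atTop 1] with N hN
    have hNpos : (0 : ℝ) < N := by exact_mod_cast hN
    rw [← sub_nonneg]
    have := natCast_le_of_norm_sum_e_le f hM' N
    field_simp
    linarith
  exact absurd (ge_of_tendsto hlim hge) (by norm_num)
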